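/- arXiv:1602.07668 — 9 statements merged into one kernel-verified Lean document; each statement's English description precedes it below -/
import Mathlib

section
/- For natural numbers n ≥ 1, j ≥ 1, and k with j ≤ k ≤ n, the identity ∑_{i=1}^{j} (-1)^{i+j} (n+i-1)! / ((n+i-k)! (i-1)! (j-i)!) = binom(k-1, j-1) · n! / (n-k+j)! holds, while for k < j the left-hand side equals 0. -/
/-!
Substituting `J = j - 1`, `d = k - 1`, `m = i - 1`, the sum becomes
`(1 / J!) ∑ₘ (-1)^(J-m) (J choose m) (n+m)_d = (Δ^J (x)_d)(n) / J!`, where `(x)_d` is the falling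
factorial. Since `Δ (x)_e = e (x)_{e-1}`, we get `Δ^J (x)_d = (d)_J (x)_{d-J}`, and `(d)_J`
vanishes exactly when `d < J`, i.e. `k < j`.
-/

open Finset Nat
open scoped fwdDiff

lemma fwdDiff_descFactorial {R : Type*} [CommRing R] (e : ℕ) :
    Δ_[1] (fun x : ℕ ↦ (x.descFactorial e : R)) =
      fun x : ℕ ↦ (e * x.descFactorial (e - 1) : R) := by
  ext x
  rcases e with _ | e
  · simp [fwdDiff]
  · simp only [fwdDiff, descFactorial_eq_factorial_mul_choose, choose_succ_succ', factorial_succ,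
      add_tsub_cancel_right]
    push_cast
    ring

lemma fwdDiff_iter_descFactorial {R : Type*} [CommRing R] (d J : ℕ) :
    (Δ_[1])^[J] (fun x : ℕ ↦ (x.descFactorial d : R)) =
      fun x : ℕ ↦ (d.descFactorial J * x.descFactorial (d - J) : R) := by
  induction J with
  | zero => simp
  | succ J ih =>
    ext x
    have hstep := congrFun (fwdDiff_descFactorial (R := R) (d - J)) x
    simp only [fwdDiff] at hstep
    rw [Function.iterate_succ_apply', ih, fwdDiff, ← mul_sub, hstep, descFactorial_succ,
      Nat.sub_sub]
    push_cast
    ring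

lemma fwdDiff_iter_div_factorial_eq_sum {K : Type*} [Field K] [CharZero K] (f : ℕ → K)
    (J y : ℕ) :
    (Δ_[1])^[J] f y / J ! =
      ∑ m ∈ range (J + 1), (-1) ^ (J - m) * f (y + m) / (m ! * (J - m)!) := by
  rw [fwdDiff_iter_eq_sum_shift, sum_div]
  refine sum_congr rfl fun m hm ↦ ?_
  rw [zsmul_eq_mul, smul_eq_mul, mul_one]
  push_cast
  rw [cast_choose K (Nat.le_of_lt_succ (mem_range.1 hm))]
  field_simp [J.factorial_ne_zero]

lemma sum_Icc_neg_one_pow_mul_factorial_div_eq {n d : ℕ} (hdn : d < n) (J : ℕ) :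
    ∑ i ∈ Icc 1 (J + 1), (-1 : ℚ) ^ (i + (J + 1)) * (n + i - 1)! /
        ((n + i - (d + 1))! * (i - 1)! * (J + 1 - i)!) =
      d.descFactorial J * n.descFactorial (d - J) / J ! := by
  rw [← congrFun (fwdDiff_iter_descFactorial (R := ℚ) d J) n,
    fwdDiff_iter_div_factorial_eq_sum, ← Ico_add_one_right_eq_Icc, sum_Ico_eq_sum_range,
    add_tsub_cancel_right]
  refine sum_congr rfl fun m hm ↦ ?_
  have hmJ : m ≤ J := Nat.le_of_lt_succ (mem_range.1 hm)
  rw [show 1 + m + (J + 1) = (J - m) + 2 * (m + 1) by omega, pow_add, pow_mul, neg_one_sq,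
    one_pow, mul_one, show n + (1 + m) - 1 = n + m by omega,
    show n + (1 + m) - (d + 1) = n + m - d by omega, add_tsub_cancel_left,
    show J + 1 - (1 + m) = J - m by omega,
    ← factorial_mul_descFactorial (show d ≤ n + m by omega)]
  push_cast
  field_simp

theorem L_entry_identity_general (n j k : ℕ) (hj : 1 ≤ j) (hk : 1 ≤ k) (hkn : k ≤ n) :
    (j ≤ k →
      ∑ i ∈ Finset.Icc 1 j,
        (-1 : ℚ) ^ (i + j) * (n + i - 1).factorial /
          ((n + i - k).factorial * (i - 1).factorial * (j - i).factorial)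
        = ((k - 1).choose (j - 1)) * n.factorial / (n - k + j).factorial) ∧
    (k < j →
      ∑ i ∈ Finset.Icc 1 j,
        (-1 : ℚ) ^ (i + j) * (n + i - 1).factorial /
          ((n + i - k).factorial * (i - 1).factorial * (j - i).factorial)
        = 0) := by
  obtain ⟨J, rfl⟩ : ∃ J, j = J + 1 := ⟨j - 1, by omega⟩
  obtain ⟨d, rfl⟩ : ∃ d, k = d + 1 := ⟨k - 1, by omega⟩
  rw [sum_Icc_neg_one_pow_mul_factorial_div_eq (by omega)]
  refine ⟨fun hJd ↦ ?_, fun hdJ ↦ ?_⟩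
  · rw [add_tsub_cancel_right, add_tsub_cancel_right, descFactorial_eq_factorial_mul_choose,
      show n - (d + 1) + (J + 1) = n - (d - J) by omega,
      ← factorial_mul_descFactorial (show d - J ≤ n by omega)]
    push_cast
    field_simp
  · rw [descFactorial_eq_zero_iff_lt.2 (by omega)]
    simp

theorem L_entry_identity (n j k : ℕ) (hj : 1 ≤ j) (hjn : j ≤ n) (hk : 1 ≤ k) (hkn : k ≤ n) :
    (j ≤ k →
      ∑ i ∈ Finset.Icc 1 j,
        (-1 : ℚ) ^ (i + j) * (n + i - 1).factorial /
          ((n + i - k).factorial * (i - 1).factorial * (j - i).factorial)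
        = ((k - 1).choose (j - 1)) * n.factorial / (n - k + j).factorial) ∧
    (k < j →
      ∑ i ∈ Finset.Icc 1 j,
        (-1 : ℚ) ^ (i + j) * (n + i - 1).factorial /
          ((n + i - k).factorial * (i - 1).factorial * (j - i).factorial)
        = 0) :=
  L_entry_identity_general n j k hj hk hkn
end

section
/- Let h > 0 and n ≥ 1, and let A_n(h) be the Wronskian matrix of t^n, ..., t^{2n-1} at t = h. Then A_n(h) is invertible. -/
/-!
Writing `(n + i)! / (n + i - k)!` as the descending factorial `(n + i)^{(k)}`, the `(k, i)` entry
is `(n + i)^{(k)} h^(n + i - k)`. Scaling row `k` by `h^k` and column `i` by `h^(-(n + i))` leaves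
the matrix `((n + i)^{(k)})`, whose rows are the monic polynomials `descPochhammer k` of degree `k`
evaluated at the nodes `n + i`; its determinant is therefore the Vandermonde determinant of the
distinct nodes `n, …, 2n - 1`, which is nonzero.
-/

open Matrix Polynomial

variable {K : Type*} [Field K] [CharZero K] {n : ℕ}

theorem Matrix.det_of_descFactorial_ne_zero {m : Fin n → ℕ} (hm : Function.Injective m) :
    (of fun k i : Fin n => ((m i).descFactorial k : K)).det ≠ 0 := by
  have hpoly : (of fun k i : Fin n => ((m i).descFactorial k : K))ᵀ =
      of fun i k : Fin n => (descPochhammer K k).eval (m i : K) := by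
    ext i k
    simp [descPochhammer_eval_eq_descFactorial]
  rw [← det_transpose, hpoly, ← det_eval_matrixOfPolynomials_eq_det_vandermonde _ _
    (descPochhammer_natDegree K ·) (monic_descPochhammer K ·), det_vandermonde_ne_zero_iff]
  exact Nat.cast_injective.comp hm

theorem Matrix.det_of_descFactorial_mul_pow_ne_zero {m : Fin n → ℕ} (hm : Function.Injective m)
    {x : K} (hx : x ≠ 0) :
    (of fun k i : Fin n => ((m i).descFactorial k : K) * x ^ (m i - k)).det ≠ 0 := by
  set M : Matrix (Fin n) (Fin n) K := of fun k i => ((m i).descFactorial k : K) * x ^ (m i - k)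
  have hscale : diagonal (fun k : Fin n => x ^ (k : ℕ)) * M =
      (of fun k i : Fin n => ((m i).descFactorial k : K)) * diagonal fun i => x ^ m i := by
    ext k i
    rw [diagonal_mul, mul_diagonal]
    rcases le_or_gt (k : ℕ) (m i) with hk | hk
    · simp only [M, of_apply]
      rw [mul_left_comm, ← pow_add, Nat.add_sub_cancel' hk]
    · simp [M, Nat.descFactorial_eq_zero_iff_lt.mpr hk]
  have hprod : (diagonal (fun k : Fin n => x ^ (k : ℕ))).det * M.det ≠ 0 := by
    rw [← det_mul, hscale, det_mul, det_diagonal]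
    exact mul_ne_zero (det_of_descFactorial_ne_zero hm)
      (Finset.prod_ne_zero_iff.mpr fun i _ => pow_ne_zero _ hx)
  exact right_ne_zero_of_mul hprod

theorem wronskian_matrix_invertible_general (n : ℕ) (h : ℝ) (hh : 0 < h) :
    IsUnit (Matrix.of fun k i : Fin n =>
        (((n + i.1).factorial : ℝ) / ((n + i.1 - k.1).factorial : ℝ)) * h ^ (n + i.1 - k.1)) := by
  have hentries : (Matrix.of fun k i : Fin n =>
        (((n + i.1).factorial : ℝ) / ((n + i.1 - k.1).factorial : ℝ)) * h ^ (n + i.1 - k.1)) =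
      of fun k i : Fin n => ((n + i.1).descFactorial k : ℝ) * h ^ (n + i.1 - k) := by
    ext k i
    have hk : k.1 ≤ n + i.1 := by omega
    rw [of_apply, of_apply, ← Nat.factorial_mul_descFactorial hk, Nat.cast_mul,
      mul_div_cancel_left₀ _ (by positivity)]
  rw [hentries, isUnit_iff_isUnit_det, isUnit_iff_ne_zero]
  exact det_of_descFactorial_mul_pow_ne_zero (add_right_injective n |>.comp Fin.val_injective)
    hh.ne'

theorem wronskian_matrix_invertible (n : ℕ) (hn : 1 ≤ n) (h : ℝ) (hh : 0 < h) :
    IsUnit (Matrix.of fun k i : Fin n =>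
        (((n + i.1).factorial : ℝ) / ((n + i.1 - k.1).factorial : ℝ)) * h ^ (n + i.1 - k.1)) :=
  wronskian_matrix_invertible_general n h hh
end

section
/- Let h > 0 and n ≥ 1. Define the n×n matrices (with 1-based indices i, j, k from 1 to n): U[i,j] = (j-1)!/(j-i)! · h^{j+n-i} if j ≥ i and 0 otherwise; L[k,j] = h^{j-k} · binom(k-1, j-1) · n!/(n-k+j)! if j ≤ k and 0 otherwise. Then A_n(h) = L · U, where A_n(h)[k,i] = (n+i-1)!/(n+i-k)! · h^{n+i-k} is the Wronskian matrix of t^n, ..., t^{2n-1} at t = h. -/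
theorem wronskian_LU_decomposition (n : ℕ) (hn : 1 ≤ n) (h : ℝ) (hh : 0 < h) :
    (Matrix.of fun k i : Fin n =>
        (((n + i.1).factorial : ℝ) / ((n + i.1 - k.1).factorial : ℝ)) * h ^ (n + i.1 - k.1))
      = (Matrix.of fun k j : Fin n =>
          if j.1 ≤ k.1 then
            h ^ ((j.1 : ℤ) - (k.1 : ℤ)) * (k.1.choose j.1 : ℝ) *
              (n.factorial : ℝ) / ((n - k.1 + j.1).factorial : ℝ)
          else 0) *
        (Matrix.of fun i j : Fin n =>
          if i.1 ≤ j.1 then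
            ((j.1.factorial : ℝ) / ((j.1 - i.1).factorial : ℝ)) * h ^ (j.1 + 1 + n - (i.1 + 1))
          else 0) := by
  have hh0 : h ≠ 0 := hh.ne'
  ext k i
  simp only [Matrix.mul_apply, Matrix.of_apply]
  have hk : k.1 ≤ n := k.2.le
  have hi : i.1 ≤ n := i.2.le
  have key : ∀ j : Fin n,
      (if j.1 ≤ k.1 then
          h ^ ((j.1 : ℤ) - (k.1 : ℤ)) * (k.1.choose j.1 : ℝ) *
            (n.factorial : ℝ) / ((n - k.1 + j.1).factorial : ℝ)
        else 0) *
      (if j.1 ≤ i.1 then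
          ((i.1.factorial : ℝ) / ((i.1 - j.1).factorial : ℝ)) * h ^ (i.1 + 1 + n - (j.1 + 1))
        else 0)
      = ((if j.1 ≤ k.1 then
            (k.1.factorial * (n.choose (k.1 - j.1) * i.1.choose j.1) : ℕ) else 0 : ℝ))
          * h ^ (n + i.1 - k.1) := by
    intro j
    by_cases hjk : j.1 ≤ k.1
    · by_cases hji : j.1 ≤ i.1
      · simp only [if_pos hjk, if_pos hji]
        have hn' : (n.factorial : ℝ)
            = (n.choose (k.1 - j.1) : ℝ) * ((k.1 - j.1).factorial : ℝ) *
              ((n - k.1 + j.1).factorial : ℝ) := by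
          have e : n - (k.1 - j.1) = n - k.1 + j.1 := by omega
          exact_mod_cast congrArg (Nat.cast (R := ℝ))
            (by rw [← e]; exact (Nat.choose_mul_factorial_mul_factorial (by omega)).symm)
        have hi' : (i.1.factorial : ℝ)
            = (i.1.choose j.1 : ℝ) * (j.1.factorial : ℝ) * ((i.1 - j.1).factorial : ℝ) := by
          exact_mod_cast congrArg (Nat.cast (R := ℝ))
            (Nat.choose_mul_factorial_mul_factorial hji).symm
        have h3 : (k.1.choose j.1 : ℝ) * (j.1.factorial : ℝ) * ((k.1 - j.1).factorial : ℝ)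
            = (k.1.factorial : ℝ) := by
          exact_mod_cast congrArg (Nat.cast (R := ℝ))
            (Nat.choose_mul_factorial_mul_factorial hjk)
        have hpow : h ^ ((j.1 : ℤ) - (k.1 : ℤ)) * h ^ (i.1 + 1 + n - (j.1 + 1))
            = h ^ (n + i.1 - k.1) := by
          rw [← zpow_natCast h (i.1 + 1 + n - (j.1 + 1)), ← zpow_natCast h (n + i.1 - k.1),
            ← zpow_add₀ hh0]
          congr 1
          omega
        have hne1 : ((n - k.1 + j.1).factorial : ℝ) ≠ 0 := by
          exact_mod_cast (n - k.1 + j.1).factorial_ne_zero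
        have hne2 : ((i.1 - j.1).factorial : ℝ) ≠ 0 := by
          exact_mod_cast (i.1 - j.1).factorial_ne_zero
        field_simp
        push_cast
        rw [hn', hi', ← hpow]
        linear_combination ((n.choose (k.1 - j.1) : ℝ) * (i.1.choose j.1 : ℝ) *
          ((n - k.1 + j.1).factorial : ℝ) * ((i.1 - j.1).factorial : ℝ) *
          h ^ ((j.1 : ℤ) - (k.1 : ℤ)) * h ^ (i.1 + 1 + n - (j.1 + 1))) * h3
      · rw [if_neg hji, mul_zero, if_pos hjk]
        have : i.1.choose j.1 = 0 := Nat.choose_eq_zero_of_lt (by omega)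
        rw [this]
        push_cast
        ring
    · rw [if_neg hjk, zero_mul, if_neg hjk, zero_mul]
  rw [Finset.sum_congr rfl (fun j _ => key j), ← Finset.sum_mul]
  congr 1
  have hsum : ∑ j : Fin n, (if j.1 ≤ k.1 then
      ((k.1.factorial * (n.choose (k.1 - j.1) * i.1.choose j.1) : ℕ) : ℝ) else 0)
      = ((k.1.factorial * (n + i.1).choose k.1 : ℕ) : ℝ) := by
    rw [Fin.sum_univ_eq_sum_range (fun j => if j ≤ k.1 then
      ((k.1.factorial * (n.choose (k.1 - j) * i.1.choose j) : ℕ) : ℝ) else 0)]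
    rw [← Finset.sum_filter]
    have hfil : (Finset.range n).filter (· ≤ k.1) = Finset.range (k.1 + 1) := by
      ext x; simp; omega
    rw [hfil]
    have hv : ∑ j ∈ Finset.range (k.1 + 1), n.choose (k.1 - j) * i.1.choose j
        = (n + i.1).choose k.1 := by
      rw [add_comm n i.1, Nat.add_choose_eq,
        Finset.Nat.sum_antidiagonal_eq_sum_range_succ_mk]
      exact Finset.sum_congr rfl fun j _ => mul_comm _ _
    have : ∑ j ∈ Finset.range (k.1 + 1),
        k.1.factorial * (n.choose (k.1 - j) * i.1.choose j)
        = k.1.factorial * (n + i.1).choose k.1 := by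
      rw [← hv, Finset.mul_sum]
    exact_mod_cast congrArg (Nat.cast (R := ℝ)) this
  rw [hsum]
  have hkni : k.1 ≤ n + i.1 := le_trans hk (Nat.le_add_right _ _)
  have hcf := Nat.choose_mul_factorial_mul_factorial hkni
  rw [div_eq_iff (by exact_mod_cast (n + i.1 - k.1).factorial_ne_zero)]
  push_cast [← hcf]
  ring
end

section
/- Let h > 0 and n ≥ 1. Define the upper-triangular n×n matrices (1-based indices): U[i,j] = (j-1)!/(j-i)! · h^{j+n-i} for j ≥ i (0 otherwise) and V[i,j] = (-1)^{i+j} / ((i-1)! (j-i)! h^{n+i-j}) for j ≥ i (0 otherwise). Then U · V = I, i.e., V = U^{-1}. -/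
/-!
Write `E x` for the upper-triangular Toeplitz matrix with entries `x ^ (j - i) / (j - i)!`,
the truncation of `exp (x N)` for the nilpotent shift `N`. By the binomial theorem
`E x * E y = E (x + y)`. With `D = diagonal (i !)` one has `U = h ^ n • (E h * D)` and
`V = (h ^ n)⁻¹ • (D⁻¹ * E (-h))`, so `U * V = E h * E (-h) = E 0 = 1`.
-/

open Finset Matrix Nat

variable {K : Type*} [Field K]

theorem add_pow_div_factorial [CharZero K] (x y : K) (d : ℕ) :
    (x + y) ^ d / d ! = ∑ m ∈ range (d + 1), x ^ m / m ! * (y ^ (d - m) / (d - m)!) := by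
  rw [add_pow, sum_div]
  refine sum_congr rfl fun m hm => ?_
  rw [cast_choose K (mem_range_succ_iff.mp hm)]
  have := factorial_ne_zero m
  have := factorial_ne_zero (d - m)
  have := factorial_ne_zero d
  field_simp

def taylorMatrix (n : ℕ) (x : K) : Matrix (Fin n) (Fin n) K :=
  Matrix.of fun i j => if (i : ℕ) ≤ j then x ^ (j - i : ℕ) / (j - i : ℕ)! else 0

theorem taylorMatrix_zero (n : ℕ) : taylorMatrix n (0 : K) = 1 := by
  ext i j
  rcases eq_or_ne i j with rfl | hij
  · simp [taylorMatrix]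
  · have hij' : (i : ℕ) ≠ j := Fin.val_ne_of_ne hij
    simp only [taylorMatrix, of_apply, one_apply_ne hij]
    split_ifs
    · rw [zero_pow (by omega), zero_div]
    · rfl

theorem taylorMatrix_mul [CharZero K] (n : ℕ) (x y : K) :
    taylorMatrix n x * taylorMatrix n y = taylorMatrix n (x + y) := by
  ext i j
  simp only [taylorMatrix, mul_apply, of_apply]
  set term : ℕ → K := fun k =>
    (if (i : ℕ) ≤ k then x ^ (k - i) / (k - i)! else 0) *
      (if k ≤ (j : ℕ) then y ^ (j - k) / (j - k)! else 0)
  rw [Fin.sum_univ_eq_sum_range term]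
  split_ifs with hij
  · have h_support : ∑ k ∈ range n, term k = ∑ k ∈ Ico (i : ℕ) (j + 1), term k := by
      refine (sum_subset (fun k hk => ?_) fun k _ hk => ?_).symm
      · simp only [mem_Ico, mem_range] at hk ⊢
        omega
      · simp only [mem_Ico, not_and_or, not_le, not_lt] at hk
        rcases hk with hk | hk
        · simp [term, show ¬ (i : ℕ) ≤ k by omega]
        · simp [term, show ¬ k ≤ (j : ℕ) by omega]
    rw [h_support, sum_Ico_eq_sum_range, show (j : ℕ) + 1 - i = j - i + 1 by omega,
      add_pow_div_factorial]
    refine sum_congr rfl fun m hm => ?_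
    have hm_le := mem_range_succ_iff.mp hm
    simp only [term, if_pos (Nat.le_add_right _ _), if_pos (show (i : ℕ) + m ≤ j by omega),
      add_tsub_cancel_left, show (j : ℕ) - (i + m) = j - i - m by omega]
  · refine sum_eq_zero fun k _ => ?_
    by_cases hik : (i : ℕ) ≤ k
    · simp [term, show ¬ k ≤ (j : ℕ) by omega]
    · simp [term, hik]

def matrixU (n : ℕ) (h : K) : Matrix (Fin n) (Fin n) K :=
  Matrix.of fun i j : Fin n =>
    if i.1 ≤ j.1 then
      ((j.1.factorial : K) / ((j.1 - i.1).factorial : K)) * h ^ (j.1 + 1 + n - (i.1 + 1))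
    else 0

def matrixV (n : ℕ) (h : K) : Matrix (Fin n) (Fin n) K :=
  Matrix.of fun i j : Fin n =>
    if i.1 ≤ j.1 then
      (-1 : K) ^ (i.1 + j.1) / ((i.1.factorial : K) * ((j.1 - i.1).factorial : K)) *
        h ^ ((j.1 : ℤ) - (i.1 : ℤ) - (n : ℤ))
    else 0

theorem matrixU_eq_smul (n : ℕ) (h : K) :
    matrixU n h = h ^ n • (taylorMatrix n h * diagonal fun j : Fin n => ((j : ℕ)! : K)) := by
  ext i j
  simp only [matrixU, taylorMatrix, Matrix.mul_diagonal, Matrix.smul_apply, of_apply, smul_eq_mul]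
  by_cases hij : (i : ℕ) ≤ j
  · rw [if_pos hij, if_pos hij, show (j : ℕ) + 1 + n - (i + 1) = n + (j - i) by omega, pow_add]
    ring
  · rw [if_neg hij, if_neg hij, zero_mul, mul_zero]

theorem matrixV_eq_smul (n : ℕ) {h : K} (hh : h ≠ 0) :
    matrixV n h =
      (h ^ n)⁻¹ • (diagonal (fun i : Fin n => ((i : ℕ)! : K)⁻¹) * taylorMatrix n (-h)) := by
  ext i j
  simp only [matrixV, taylorMatrix, Matrix.diagonal_mul, Matrix.smul_apply, of_apply, smul_eq_mul]
  by_cases hij : (i : ℕ) ≤ j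
  · have h_zpow : h ^ ((j : ℤ) - i - n) = h ^ (j - i : ℕ) * (h ^ n)⁻¹ := by
      rw [zpow_sub₀ hh, ← Nat.cast_sub hij, zpow_natCast, zpow_natCast, div_eq_mul_inv]
    have h_sign : (-1 : K) ^ ((i : ℕ) + j) = (-1) ^ (j - i : ℕ) := by
      rw [show (i : ℕ) + j = (j - i) + 2 * i by omega, pow_add, pow_mul]
      simp
    rw [if_pos hij, if_pos hij, h_zpow, h_sign, neg_pow h]
    ring
  · rw [if_neg hij, if_neg hij, mul_zero, mul_zero]

theorem matrixU_mul_matrixV [CharZero K] (n : ℕ) {h : K} (hh : h ≠ 0) :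
    matrixU n h * matrixV n h = 1 := by
  have h_diag :
      (diagonal fun j : Fin n => ((j : ℕ)! : K)) * diagonal (fun i : Fin n => ((i : ℕ)! : K)⁻¹) = 1 := by
    rw [diagonal_mul_diagonal, ← diagonal_one]
    exact congrArg diagonal
      (funext fun i => mul_inv_cancel₀ (by exact_mod_cast factorial_ne_zero _))
  rw [matrixU_eq_smul, matrixV_eq_smul n hh, smul_mul_smul_comm, mul_inv_cancel₀ (pow_ne_zero n hh),
    one_smul, Matrix.mul_assoc, ← Matrix.mul_assoc (diagonal _), h_diag, Matrix.one_mul,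
    taylorMatrix_mul, add_neg_cancel, taylorMatrix_zero]

theorem U_inverse_general (n : ℕ) (h : ℝ) (hh : 0 < h) :
    (Matrix.of fun i j : Fin n =>
        if i.1 ≤ j.1 then
          ((j.1.factorial : ℝ) / ((j.1 - i.1).factorial : ℝ)) * h ^ (j.1 + 1 + n - (i.1 + 1))
        else 0) *
      (Matrix.of fun i j : Fin n =>
        if i.1 ≤ j.1 then
          (-1 : ℝ) ^ (i.1 + j.1) /
            ((i.1.factorial : ℝ) * ((j.1 - i.1).factorial : ℝ)) *
            h ^ ((j.1 : ℤ) - (i.1 : ℤ) - (n : ℤ))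
        else 0) = 1 :=
  matrixU_mul_matrixV n hh.ne'

theorem U_inverse (n : ℕ) (hn : 1 ≤ n) (h : ℝ) (hh : 0 < h) :
    (Matrix.of fun i j : Fin n =>
        if i.1 ≤ j.1 then
          ((j.1.factorial : ℝ) / ((j.1 - i.1).factorial : ℝ)) * h ^ (j.1 + 1 + n - (i.1 + 1))
        else 0) *
      (Matrix.of fun i j : Fin n =>
        if i.1 ≤ j.1 then
          (-1 : ℝ) ^ (i.1 + j.1) /
            ((i.1.factorial : ℝ) * ((j.1 - i.1).factorial : ℝ)) *
            h ^ ((j.1 : ℤ) - (i.1 : ℤ) - (n : ℤ))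
        else 0) = 1 :=
  U_inverse_general n h hh
end

section
/- Let h > 0 and n ≥ 1. Define the lower-triangular n×n matrices (1-based indices): L[k,j] = h^{j-k} binom(k-1, j-1) n!/(n-k+j)! for j ≤ k (0 otherwise), and M[j,i] = (-1)^{j-i} h^{i-j} · (j-1)!/(i-1)! · binom(n+j-i-1, j-i) for j ≥ i (0 otherwise). Then L · M = I, i.e., M = L^{-1}. -/
/-!
Let `D = diag(h^k)`. The powers of `h` make `L = D⁻¹ L₀ D` and `M = D⁻¹ M₀ D`, where `L₀`, `M₀`
are the matrices at `h = 1`, so it suffices to show `L₀ M₀ = 1`. For `k = i + d` with `d ≥ 1`,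
substituting `j = i + m` turns the `(k, i)` entry of `L₀ M₀` into
`C(k, i) · n · (d - 1)! · ∑ₘ (-1)^m C(d, m) C(n - 1 + m, d - 1)`, and this alternating sum is, up to
sign, the `d`-th forward difference of `x ↦ C(x, d - 1)`, a polynomial of degree `d - 1`.
-/

open Finset Matrix Nat fwdDiff

lemma alternating_sum_choose_mul_choose_add (a : ℕ) {d : ℕ} (hd : d ≠ 0) :
    ∑ m ∈ range (d + 1), (-1 : ℤ) ^ m * d.choose m * (a + m).choose (d - 1) = 0 := by
  obtain ⟨e, rfl⟩ := Nat.exists_eq_succ_of_ne_zero hd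
  have hΔ : (Δ_[1])^[e + 1] (fun x ↦ x.choose e : ℕ → ℤ) a = 0 := by
    have hchoose := fwdDiff_iter_choose 0 e
    rw [add_zero] at hchoose
    simp [Function.iterate_succ_apply', hchoose, fwdDiff]
  rw [fwdDiff_iter_eq_sum_shift] at hΔ
  rw [← mul_zero ((-1 : ℤ) ^ (e + 1)), ← hΔ, mul_sum]
  refine sum_congr rfl fun m hm ↦ ?_
  have hsign : (-1 : ℤ) ^ m = (-1) ^ (e + 1) * (-1) ^ (e + 1 - m) := by
    rw [← pow_add, show e + 1 + (e + 1 - m) = m + 2 * (e + 1 - m) by grind, pow_add, pow_mul]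
    simp
  simp only [hsign, smul_eq_mul, mul_one, succ_eq_add_one, add_tsub_cancel_right]
  ring

variable {K : Type*} [Field K]

lemma zpow_conj_mul_zpow_conj {ι : Type*} [Fintype ι] {h : K} (hh : h ≠ 0) (w : ι → ℤ)
    (A B : Matrix ι ι K) :
    (of fun k j ↦ h ^ (w j - w k) * A k j) * (of fun j i ↦ h ^ (w i - w j) * B j i) =
      of fun k i ↦ h ^ (w i - w k) * (A * B) k i := by
  ext k i
  simp only [mul_apply, of_apply, mul_sum]
  refine sum_congr rfl fun j _ ↦ ?_
  rw [show w i - w k = (w j - w k) + (w i - w j) by ring, zpow_add₀ hh]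
  ring

lemma zpow_conj_mul_zpow_conj_eq_one {ι : Type*} [Fintype ι] [DecidableEq ι] {h : K} (hh : h ≠ 0)
    (w : ι → ℤ) {A B : Matrix ι ι K} (hAB : A * B = 1) :
    (of fun k j ↦ h ^ (w j - w k) * A k j) * (of fun j i ↦ h ^ (w i - w j) * B j i) = 1 := by
  rw [zpow_conj_mul_zpow_conj hh, hAB]
  ext k i
  rcases eq_or_ne k i with rfl | hki
  · simp
  · simp [one_apply_ne hki]

-- The entries of `L` and `M` at `h = 1`, with 0-based indices.
def entryL (n k j : ℕ) : K :=
  if j ≤ k then (k.choose j : K) * n ! / (n - k + j)! else 0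

def entryM (n j i : ℕ) : K :=
  if i ≤ j then (-1) ^ (j - i) * ((j ! : K) / i !) * ((n + (j - i) - 1).choose (j - i) : K) else 0

lemma entryL_eq_zero_of_lt {n k j : ℕ} (h : k < j) : entryL (K := K) n k j = 0 :=
  if_neg (by omega)

lemma entryM_eq_zero_of_lt {n j i : ℕ} (h : j < i) : entryM (K := K) n j i = 0 :=
  if_neg (by omega)

variable [CharZero K]

lemma entryL_mul_entryM {n i d m : ℕ} (hn : i + d < n) (hd : d ≠ 0) (hm : m ≤ d) :
    entryL n (i + d) (i + m) * entryM n (i + m) i =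
      ((i + d).choose i * n * (d - 1)! : K) *
        (((-1 : ℤ) ^ m * d.choose m * (n - 1 + m).choose (d - 1) : ℤ) : K) := by
  have hfact : ∀ a : ℕ, (a ! : K) ≠ 0 := fun a ↦ by exact_mod_cast a.factorial_ne_zero
  rw [entryL, entryM, if_pos (by omega), if_pos (by omega), Nat.add_sub_cancel_left,
    cast_choose K (by omega : i + m ≤ i + d), cast_choose K (by omega : i ≤ i + d),
    cast_choose K (by omega : m ≤ n + m - 1)]
  push_cast
  rw [cast_choose K hm, cast_choose K (by omega : d - 1 ≤ n - 1 + m),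
    show i + d - (i + m) = d - m by omega, Nat.add_sub_cancel_left,
    show n - (i + d) + (i + m) = n - 1 + m - (d - 1) by omega,
    show n + m - 1 - m = n - 1 by omega, show n + m - 1 = n - 1 + m by omega,
    ← Nat.mul_factorial_pred (show n ≠ 0 by omega), ← Nat.mul_factorial_pred hd]
  push_cast
  field_simp [hfact]

lemma sum_entryL_mul_entryM {n k i : ℕ} (hk : k < n) :
    ∑ j ∈ range n, entryL (K := K) n k j * entryM n j i = if k = i then 1 else 0 := by
  have hvanish : ∀ j, (j < i ∨ k < j) → entryL (K := K) n k j * entryM n j i = 0 := by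
    rintro j (hj | hj)
    · rw [entryM_eq_zero_of_lt hj, mul_zero]
    · rw [entryL_eq_zero_of_lt hj, zero_mul]
  rcases lt_or_ge k i with hki | hik
  · rw [if_neg hki.ne]
    exact sum_eq_zero fun j _ ↦ hvanish j (by omega)
  obtain ⟨d, rfl⟩ := Nat.exists_eq_add_of_le hik
  have hsupport : ∑ j ∈ range n, entryL (K := K) n (i + d) j * entryM n j i =
      ∑ m ∈ range (d + 1), entryL n (i + d) (i + m) * entryM n (i + m) i := by
    rw [← sum_subset (s₁ := Ico i (i + d + 1)), sum_Ico_eq_sum_range, add_assoc,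
      Nat.add_sub_cancel_left]
    · intro j hj
      simp only [mem_Ico, mem_range] at hj ⊢
      omega
    · intro j _ hj
      simp only [mem_Ico, not_and_or, not_le, not_lt] at hj
      exact hvanish j (by omega)
  rw [hsupport]
  rcases eq_or_ne d 0 with rfl | hd
  · simp [entryL, entryM, Nat.sub_add_cancel (show i ≤ n by omega), Nat.factorial_ne_zero]
  rw [if_neg (by omega),
    sum_congr rfl fun m hm ↦ entryL_mul_entryM hk hd (Nat.lt_succ_iff.mp (mem_range.mp hm)),
    ← mul_sum, ← Int.cast_sum, alternating_sum_choose_mul_choose_add _ hd, Int.cast_zero, mul_zero]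

lemma of_entryL_mul_of_entryM (n : ℕ) :
    (of fun k j : Fin n ↦ entryL (K := K) n k j) * (of fun j i : Fin n ↦ entryM n j i) = 1 := by
  ext k i
  simp only [mul_apply, of_apply]
  rw [one_apply, Fin.sum_univ_eq_sum_range (fun j ↦ entryL n k j * entryM n j i),
    sum_entryL_mul_entryM k.isLt]
  simp only [Fin.val_inj]

theorem L_inverse_general (n : ℕ) (h : ℝ) (hh : 0 < h) :
    (Matrix.of fun k j : Fin n =>
        if j.1 ≤ k.1 then
          h ^ ((j.1 : ℤ) - (k.1 : ℤ)) * (k.1.choose j.1 : ℝ) *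
            (n.factorial : ℝ) / ((n - k.1 + j.1).factorial : ℝ)
        else 0) *
      (Matrix.of fun j i : Fin n =>
        if i.1 ≤ j.1 then
          (-1 : ℝ) ^ (j.1 - i.1) * h ^ ((i.1 : ℤ) - (j.1 : ℤ)) *
            ((j.1.factorial : ℝ) / (i.1.factorial : ℝ)) *
            ((n + (j.1 - i.1) - 1).choose (j.1 - i.1) : ℝ)
        else 0) = 1 := by
  convert zpow_conj_mul_zpow_conj_eq_one hh.ne' (fun k : Fin n ↦ (k.1 : ℤ))
    (of_entryL_mul_of_entryM n) using 3 <;>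
  · ext k j
    simp only [of_apply, entryL, entryM, mul_ite, mul_zero]
    split_ifs <;> ring

theorem L_inverse (n : ℕ) (hn : 1 ≤ n) (h : ℝ) (hh : 0 < h) :
    (Matrix.of fun k j : Fin n =>
        if j.1 ≤ k.1 then
          h ^ ((j.1 : ℤ) - (k.1 : ℤ)) * (k.1.choose j.1 : ℝ) *
            (n.factorial : ℝ) / ((n - k.1 + j.1).factorial : ℝ)
        else 0) *
      (Matrix.of fun j i : Fin n =>
        if i.1 ≤ j.1 then
          (-1 : ℝ) ^ (j.1 - i.1) * h ^ ((i.1 : ℤ) - (j.1 : ℤ)) *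
            ((j.1.factorial : ℝ) / (i.1.factorial : ℝ)) *
            ((n + (j.1 - i.1) - 1).choose (j.1 - i.1) : ℝ)
        else 0) = 1 :=
  L_inverse_general n h hh
end

section
/- C_{n,h}(x_0,...,x_{n-1}; y_0,...,y_{n-1}) = 0 if and only if y_j = ∑_{i=j}^{n-1} h^{i-j}/(i-j)! · x_i for all j = 0, ..., n-1. -/
/-!
The free evolution of `x` is the polynomial curve `P t = ∑ i, tⁱ / i! • xᵢ`: its jet at `0` is `x`,
its jet at `h` is the right-hand side, and `P⁽ⁿ⁾ = 0`. So if `y` is that jet, `P` is admissible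
with cost `0`. Conversely, for an admissible `ξ` the difference `η = ξ - P` has zero jet at `0`
and `η⁽ⁿ⁾ = ξ⁽ⁿ⁾`; integrating `n - j` times and Cauchy–Schwarz give
`‖yⱼ - P⁽ʲ⁾ h‖² ≤ h ^ (2 (n - 1 - j) + 1) * ∫₀ʰ ‖ξ⁽ⁿ⁾‖²`, so a zero infimum forces `yⱼ = P⁽ʲ⁾ h`.
This needs the admissible set to be nonempty (`sInf ∅ = 0`): glue the free evolutions of `x`
from `0` and of `y` from `h` with a smooth transition.
-/

/-- The mean squared derivative cost function `C_{n,h}(x; y)`. -/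
noncomputable def msdCost (n d : ℕ) (h : ℝ) (x y : Fin n → EuclideanSpace ℝ (Fin d)) : ℝ :=
  sInf { c : ℝ | ∃ ξ : ℝ → EuclideanSpace ℝ (Fin d), ContDiff ℝ n ξ ∧
    (∀ k : Fin n, iteratedDeriv k ξ 0 = x k ∧ iteratedDeriv k ξ h = y k) ∧
    c = ∫ t in (0:ℝ)..h, ‖iteratedDeriv n ξ t‖ ^ 2 }


open Set intervalIntegral
open scoped ContDiff Topology

/-- The `j`-th derivative of `t ↦ tⁱ / i!`. -/
noncomputable def jetCoeff (j i : ℕ) (t : ℝ) : ℝ :=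
  if j ≤ i then t ^ (i - j) / (i - j).factorial else 0

theorem contDiff_jetCoeff (j i : ℕ) {m : WithTop ℕ∞} : ContDiff ℝ m (jetCoeff j i) := by
  unfold jetCoeff
  split_ifs <;> fun_prop

theorem deriv_jetCoeff (j i : ℕ) : deriv (jetCoeff j i) = jetCoeff (j + 1) i := by
  funext t
  unfold jetCoeff
  rcases lt_trichotomy j i with hji | rfl | hij
  · obtain ⟨k, rfl⟩ : ∃ k, i = j + 1 + k := ⟨i - (j + 1), by omega⟩
    simp only [show j ≤ j + 1 + k by omega, show j + 1 ≤ j + 1 + k by omega, if_true,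
      show j + 1 + k - j = k + 1 by omega, show j + 1 + k - (j + 1) = k by omega,
      deriv_div_const, deriv_pow_field, Nat.factorial_succ, Nat.cast_mul, Nat.cast_succ,
      Nat.add_sub_cancel]
    field_simp
  · simp
  · simp [show ¬ j ≤ i by omega, show ¬ j + 1 ≤ i by omega]

theorem iteratedDeriv_jetCoeff (k j i : ℕ) :
    iteratedDeriv k (jetCoeff j i) = jetCoeff (j + k) i := by
  induction k generalizing j with
  | zero => simp
  | succ k ih => rw [iteratedDeriv_succ', deriv_jetCoeff, ih, add_assoc, add_comm 1 k]

theorem jetCoeff_zero_right (j i : ℕ) : jetCoeff j i 0 = if j = i then 1 else 0 := by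
  unfold jetCoeff
  split_ifs with hle heq heq
  · simp [heq]
  · simp [zero_pow (show i - j ≠ 0 by omega)]
  · omega
  · rfl

section FreeCurve

variable {E : Type*} [NormedAddCommGroup E] [NormedSpace ℝ E] {n : ℕ}

noncomputable def freeCurve (x : Fin n → E) (t : ℝ) : E :=
  ∑ i : Fin n, jetCoeff 0 i t • x i

theorem contDiff_freeCurve (x : Fin n → E) {m : WithTop ℕ∞} : ContDiff ℝ m (freeCurve x) :=
  ContDiff.sum fun i _ => (contDiff_jetCoeff 0 i).smul contDiff_const

theorem iteratedDeriv_freeCurve (x : Fin n → E) (k : ℕ) (t : ℝ) :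
    iteratedDeriv k (freeCurve x) t = ∑ i : Fin n, jetCoeff k i t • x i := by
  unfold freeCurve
  rw [iteratedDeriv_fun_sum (f := fun (i : Fin n) t => jetCoeff 0 i t • x i)
    fun i _ => ((contDiff_jetCoeff 0 i).smul contDiff_const).contDiffAt]
  refine Finset.sum_congr rfl fun i _ => ?_
  rw [iteratedDeriv_smul_const (contDiff_jetCoeff 0 i).contDiffAt, iteratedDeriv_jetCoeff,
    zero_add]

theorem iteratedDeriv_freeCurve_zero (x : Fin n → E) (k : Fin n) :
    iteratedDeriv k (freeCurve x) 0 = x k := by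
  rw [iteratedDeriv_freeCurve, Finset.sum_eq_single k]
  · simp [jetCoeff_zero_right]
  · intro i _ hik
    simp [jetCoeff_zero_right, Fin.val_eq_val, Ne.symm hik]
  · simp

theorem iteratedDeriv_freeCurve_eq_zero (x : Fin n → E) : iteratedDeriv n (freeCurve x) = 0 := by
  funext t
  simp [iteratedDeriv_freeCurve, jetCoeff, Fin.is_lt, not_le_of_gt]

theorem iteratedDeriv_freeCurve_eq_sum_ite (x : Fin n → E) (k : ℕ) (t : ℝ) :
    iteratedDeriv k (freeCurve x) t =
      ∑ i : Fin n, if k ≤ (i : ℕ) then (t ^ ((i : ℕ) - k) / ((i : ℕ) - k).factorial) • x i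
        else 0 := by
  simp only [iteratedDeriv_freeCurve, jetCoeff, ite_smul, zero_smul]

theorem exists_contDiff_iteratedDeriv_eq {a b : ℝ} (hab : a < b) (x y : Fin n → E) :
    ∃ ξ : ℝ → E, ContDiff ℝ ∞ ξ ∧
      ∀ k : Fin n, iteratedDeriv k ξ a = x k ∧ iteratedDeriv k ξ b = y k := by
  set P : ℝ → E := fun t => freeCurve x (t - a)
  set Q : ℝ → E := fun t => freeCurve y (t - b)
  set φ : ℝ → ℝ := fun t => Real.smoothTransition (3 * (t - a) / (b - a) - 1)
  have hP : ContDiff ℝ ∞ P := (contDiff_freeCurve x).comp (contDiff_id.sub contDiff_const)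
  have hQ : ContDiff ℝ ∞ Q := (contDiff_freeCurve y).comp (contDiff_id.sub contDiff_const)
  have hφ : ContDiff ℝ ∞ φ := Real.smoothTransition.contDiff.comp (by fun_prop)
  have hab' : 0 < b - a := sub_pos.2 hab
  have near_a : (fun t => P t + φ t • (Q t - P t)) =ᶠ[𝓝 a] P := by
    filter_upwards [Iio_mem_nhds (show a < a + (b - a) / 3 by linarith)] with t ht
    have : φ t = 0 := Real.smoothTransition.zero_of_nonpos <| by
      rw [sub_nonpos, div_le_one hab']; linarith [mem_Iio.1 ht]
    simp [this]
  have near_b : (fun t => P t + φ t • (Q t - P t)) =ᶠ[𝓝 b] Q := by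
    filter_upwards [Ioi_mem_nhds (show a + 2 * (b - a) / 3 < b by linarith)] with t ht
    have : φ t = 1 := Real.smoothTransition.one_of_one_le <| by
      rw [le_sub_iff_add_le, le_div_iff₀ hab']; linarith [mem_Ioi.1 ht]
    simp [this]
  refine ⟨fun t => P t + φ t • (Q t - P t), hP.add (hφ.smul (hQ.sub hP)), fun k => ⟨?_, ?_⟩⟩
  · rw [near_a.iteratedDeriv_eq, iteratedDeriv_comp_sub_const]
    simpa using iteratedDeriv_freeCurve_zero _ k
  · rw [near_b.iteratedDeriv_eq, iteratedDeriv_comp_sub_const]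
    simpa using iteratedDeriv_freeCurve_zero _ k

theorem sq_intervalIntegral_le {f : ℝ → ℝ} (hf : Continuous f) {a b : ℝ} (hab : a ≤ b) :
    (∫ t in a..b, f t) ^ 2 ≤ (b - a) * ∫ t in a..b, f t ^ 2 := by
  have hint : ∀ g : ℝ → ℝ, Continuous g → IntervalIntegrable g MeasureTheory.volume a b :=
    fun g hg => hg.intervalIntegrable a b
  have quadratic_nonneg : ∀ c : ℝ,
      0 ≤ (b - a) * (c * c) + (-2 * ∫ t in a..b, f t) * c + ∫ t in a..b, f t ^ 2 := by
    intro c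
    calc 0 ≤ ∫ t in a..b, (f t - c) ^ 2 := integral_nonneg hab fun _ _ => sq_nonneg _
      _ = ∫ t in a..b, (f t ^ 2 + (-2 * c) * f t + c * c) := by congr 1; ext t; ring
      _ = _ := by
        rw [integral_add (hint _ (by fun_prop)) intervalIntegrable_const,
          integral_add (hint _ (by fun_prop)) (hint _ (by fun_prop)), integral_const_mul,
          integral_const, smul_eq_mul]
        ring
  have := discrim_le_zero quadratic_nonneg
  unfold discrim at this
  linarith

section JetBounds

variable {E : Type*} [NormedAddCommGroup E] [NormedSpace ℝ E] {n : ℕ} {f : ℝ → E}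

theorem ContDiff.hasDerivAt_iteratedDeriv (hf : ContDiff ℝ n f) {k : ℕ} (hk : k < n) (t : ℝ) :
    HasDerivAt (iteratedDeriv k f) (iteratedDeriv (k + 1) f t) t := by
  rw [iteratedDeriv_succ]
  exact (hf.differentiable_iteratedDeriv k (by exact_mod_cast hk) t).hasDerivAt

variable [CompleteSpace E]

theorem norm_iteratedDeriv_le_of_iteratedDeriv_zero (hf : ContDiff ℝ n f)
    (hf0 : ∀ k < n, iteratedDeriv k f 0 = 0) {h : ℝ} {j : ℕ} (hj : j < n) {t : ℝ}
    (ht : t ∈ Icc 0 h) :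
    ‖iteratedDeriv j f t‖ ≤ h ^ (n - 1 - j) * ∫ s in 0..h, ‖iteratedDeriv n f s‖ := by
  set I := ∫ s in 0..h, ‖iteratedDeriv n f s‖
  have hcont : Continuous (iteratedDeriv n f) := hf.continuous_iteratedDeriv n le_rfl
  have hh : 0 ≤ h := ht.1.trans ht.2
  have hI : 0 ≤ I := integral_nonneg hh fun _ _ => norm_nonneg _
  suffices H : ∀ m < n, ∀ t ∈ Icc 0 h, ‖iteratedDeriv (n - 1 - m) f t‖ ≤ h ^ m * I by
    simpa [show n - 1 - (n - 1 - j) = j by omega] using H (n - 1 - j) (by omega) t ht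
  intro m
  induction m with
  | zero =>
    intro hn t ht
    have hd (s : ℝ) : HasDerivAt (iteratedDeriv (n - 1) f) (iteratedDeriv n f s) s := by
      simpa [Nat.sub_add_cancel hn] using hf.hasDerivAt_iteratedDeriv (k := n - 1) (by omega) s
    calc ‖iteratedDeriv (n - 1 - 0) f t‖ = ‖∫ s in 0..t, iteratedDeriv n f s‖ := by
          rw [integral_eq_sub_of_hasDerivAt (fun s _ => hd s) (hcont.intervalIntegrable _ _),
            hf0 _ (by omega), sub_zero, Nat.sub_zero]
      _ ≤ ∫ s in 0..t, ‖iteratedDeriv n f s‖ := norm_integral_le_integral_norm ht.1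
      _ ≤ I := integral_mono_interval le_rfl ht.1 ht.2
          (Filter.Eventually.of_forall fun _ => norm_nonneg _) (hcont.norm.intervalIntegrable _ _)
      _ = h ^ 0 * I := (one_mul _).symm
  | succ m ih =>
    intro hm t ht
    have hd (s : ℝ) : HasDerivWithinAt (iteratedDeriv (n - 1 - (m + 1)) f)
        (iteratedDeriv (n - 1 - m) f s) (Icc 0 h) s := by
      have := hf.hasDerivAt_iteratedDeriv (k := n - 1 - (m + 1)) (by omega) s
      rw [show n - 1 - (m + 1) + 1 = n - 1 - m by omega] at this
      exact this.hasDerivWithinAt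
    have hmv := norm_image_sub_le_of_norm_deriv_le_segment' (fun s _ => hd s)
      (fun s hs => ih (by omega) s (Ico_subset_Icc_self hs)) t ht
    rw [hf0 _ (by omega), sub_zero, sub_zero] at hmv
    calc _ ≤ h ^ m * I * t := hmv
      _ ≤ h ^ m * I * h := by gcongr; exact ht.2
      _ = h ^ (m + 1) * I := by ring

theorem norm_sub_iteratedDeriv_freeCurve_sq_le (hf : ContDiff ℝ n f) {x : Fin n → E}
    (hx : ∀ k : Fin n, iteratedDeriv k f 0 = x k) {h : ℝ} (hh : 0 ≤ h) (j : Fin n) :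
    ‖iteratedDeriv j f h - iteratedDeriv j (freeCurve x) h‖ ^ 2 ≤
      h ^ (2 * (n - 1 - j)) * h * ∫ t in 0..h, ‖iteratedDeriv n f t‖ ^ 2 := by
  set η := f - freeCurve x
  have hη : ContDiff ℝ n η := hf.sub (contDiff_freeCurve x)
  have hηk {k : ℕ} (hk : k ≤ n) (t : ℝ) :
      iteratedDeriv k η t = iteratedDeriv k f t - iteratedDeriv k (freeCurve x) t :=
    iteratedDeriv_sub ((hf.of_le (by exact_mod_cast hk)).contDiffAt)
      (contDiff_freeCurve x).contDiffAt
  have hη0 (k : ℕ) (hk : k < n) : iteratedDeriv k η 0 = 0 := by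
    rw [hηk hk.le, hx ⟨k, hk⟩, iteratedDeriv_freeCurve_zero x ⟨k, hk⟩, sub_self]
  have hηn : iteratedDeriv n η = iteratedDeriv n f := by
    funext t
    rw [hηk le_rfl, iteratedDeriv_freeCurve_eq_zero, Pi.zero_apply, sub_zero]
  have hcont : Continuous fun t => ‖iteratedDeriv n f t‖ :=
    (hf.continuous_iteratedDeriv n le_rfl).norm
  calc ‖iteratedDeriv j f h - iteratedDeriv j (freeCurve x) h‖ ^ 2
      = ‖iteratedDeriv j η h‖ ^ 2 := by rw [hηk j.is_lt.le]
    _ ≤ (h ^ (n - 1 - j) * ∫ t in 0..h, ‖iteratedDeriv n f t‖) ^ 2 := by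
      rw [← hηn]
      gcongr
      exact norm_iteratedDeriv_le_of_iteratedDeriv_zero hη hη0 j.is_lt ⟨hh, le_rfl⟩
    _ ≤ h ^ (2 * (n - 1 - j)) * ((h - 0) * ∫ t in 0..h, ‖iteratedDeriv n f t‖ ^ 2) := by
      rw [mul_pow, ← pow_mul, mul_comm (n - 1 - j)]
      gcongr
      exact sq_intervalIntegral_le hcont hh
    _ = _ := by ring

end JetBounds

section MsdCost

variable {n d : ℕ} {h : ℝ} {x y : Fin n → EuclideanSpace ℝ (Fin d)}

theorem msdCost_nonneg (hh : 0 ≤ h) : 0 ≤ msdCost n d h x y := by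
  refine Real.sInf_nonneg ?_
  rintro _ ⟨ξ, -, -, rfl⟩
  exact integral_nonneg hh fun _ _ => sq_nonneg _

theorem msdCost_le (hh : 0 ≤ h) {ξ : ℝ → EuclideanSpace ℝ (Fin d)} (hξ : ContDiff ℝ n ξ)
    (hjet : ∀ k : Fin n, iteratedDeriv k ξ 0 = x k ∧ iteratedDeriv k ξ h = y k) :
    msdCost n d h x y ≤ ∫ t in 0..h, ‖iteratedDeriv n ξ t‖ ^ 2 := by
  refine csInf_le ⟨0, ?_⟩ ⟨ξ, hξ, hjet, rfl⟩
  rintro _ ⟨ξ, -, -, rfl⟩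
  exact integral_nonneg hh fun _ _ => sq_nonneg _

theorem le_msdCost (hh : 0 < h) {a : ℝ}
    (ha : ∀ ξ : ℝ → EuclideanSpace ℝ (Fin d), ContDiff ℝ n ξ →
      (∀ k : Fin n, iteratedDeriv k ξ 0 = x k ∧ iteratedDeriv k ξ h = y k) →
      a ≤ ∫ t in 0..h, ‖iteratedDeriv n ξ t‖ ^ 2) :
    a ≤ msdCost n d h x y := by
  obtain ⟨ξ, hξ, hjet⟩ := exists_contDiff_iteratedDeriv_eq hh x y
  refine le_csInf ⟨_, ξ, hξ.of_le (by exact_mod_cast le_top), hjet, rfl⟩ ?_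
  rintro _ ⟨ξ, hξ, hjet, rfl⟩
  exact ha ξ hξ hjet

theorem msdCost_eq_zero_of_eq_freeCurve (hh : 0 ≤ h)
    (hy : ∀ j : Fin n, y j = iteratedDeriv j (freeCurve x) h) : msdCost n d h x y = 0 := by
  refine le_antisymm ?_ (msdCost_nonneg hh)
  calc msdCost n d h x y ≤ ∫ t in 0..h, ‖iteratedDeriv n (freeCurve x) t‖ ^ 2 :=
        msdCost_le hh (contDiff_freeCurve x) fun k =>
          ⟨iteratedDeriv_freeCurve_zero x k, (hy k).symm⟩
    _ = 0 := by simp [iteratedDeriv_freeCurve_eq_zero]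

theorem eq_freeCurve_of_msdCost_eq_zero (hh : 0 < h) (hzero : msdCost n d h x y = 0)
    (j : Fin n) : y j = iteratedDeriv j (freeCurve x) h := by
  set C : ℝ := h ^ (2 * (n - 1 - j)) * h
  have hC : 0 < C := by positivity
  have hle : ‖y j - iteratedDeriv j (freeCurve x) h‖ ^ 2 / C ≤ msdCost n d h x y := by
    refine le_msdCost hh fun ξ hξ hjet => ?_
    rw [div_le_iff₀' hC, ← (hjet j).2]
    exact norm_sub_iteratedDeriv_freeCurve_sq_le hξ (fun k => (hjet k).1) hh.le j
  rw [hzero, div_le_iff₀ hC, zero_mul] at hle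
  simpa [sub_eq_zero] using hle.antisymm (sq_nonneg _)

end MsdCost

theorem msdCost_eq_zero_iff_general (n d : ℕ) (h : ℝ) (hh : 0 < h)
    (x y : Fin n → EuclideanSpace ℝ (Fin d)) :
    msdCost n d h x y = 0 ↔
      ∀ j : Fin n, y j = ∑ i : Fin n,
        if (j : ℕ) ≤ (i : ℕ) then
          (h ^ ((i : ℕ) - (j : ℕ)) / (((i : ℕ) - (j : ℕ)).factorial : ℝ)) • x i
        else 0 := by
  simp only [← iteratedDeriv_freeCurve_eq_sum_ite]
  exact ⟨eq_freeCurve_of_msdCost_eq_zero hh, msdCost_eq_zero_of_eq_freeCurve hh.le⟩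

theorem msdCost_eq_zero_iff (n d : ℕ) (hn : 1 ≤ n) (hd : 1 ≤ d) (h : ℝ) (hh : 0 < h)
    (x y : Fin n → EuclideanSpace ℝ (Fin d)) :
    msdCost n d h x y = 0 ↔
      ∀ j : Fin n, y j = ∑ i : Fin n,
        if (j : ℕ) ≤ (i : ℕ) then
          (h ^ ((i : ℕ) - (j : ℕ)) / (((i : ℕ) - (j : ℕ)).factorial : ℝ)) • x i
        else 0 :=
  msdCost_eq_zero_iff_general n d h hh x y
end FreeCurve
end

section
/- For all x_0, x_1, y_0, y_1 ∈ ℝ^d and h > 0, C_{2,h}(x_0, x_1; y_0, y_1) = (1/h)[ |y_1 − x_1|² + 3 |y_1 − x_1 − (2/h)(y_0 − x_0 − h x_1)|² ], where C_{2,h} is the infimum of ∫_0^h |ξ''(t)|² dt over ξ ∈ C²([0,h], ℝ^d) with ξ(0) = x_0, ξ'(0) = x_1, ξ(h) = y_0, ξ'(h) = y_1. -/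
/-!
The boundary data fix the first two moments of the acceleration: `∫₀ʰ ξ'' = ξ'(h) - ξ'(0)` and,
integrating by parts, `∫₀ʰ t ξ''(t) dt = (h ξ'(h) - ξ(h)) + ξ(0)`. Among continuous functions with
prescribed moments against `1` and `t`, an affine one has the least `L²` norm, since the difference
is orthogonal to every affine function. An affine acceleration is realised by a cubic, and there is
a cubic with the given boundary data; its acceleration is `h⁻¹ (a + 3 (2t/h - 1) b)` with
`a = y₁ - x₁` and `b` the second vector in the formula, and since `1` and `2t/h - 1` are orthogonal
on `[0, h]`, its energy is `(|a|² + 3 |b|²) / h`.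
-/

open scoped RealInnerProductSpace
open intervalIntegral

section Calculus

variable {E : Type*} [NormedAddCommGroup E] [NormedSpace ℝ E]

theorem forall_fin_two_iteratedDeriv_iff {ξ : ℝ → E} {s t : ℝ} {x y : Fin 2 → E} :
    (∀ k : Fin 2, iteratedDeriv k ξ s = x k ∧ iteratedDeriv k ξ t = y k) ↔
      (ξ s = x 0 ∧ ξ t = y 0) ∧ (deriv ξ s = x 1 ∧ deriv ξ t = y 1) := by
  simp [Fin.forall_fin_two]

theorem hasDerivAt_deriv_of_contDiff_two {ξ : ℝ → E} (hξ : ContDiff ℝ 2 ξ) (t : ℝ) :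
    HasDerivAt (deriv ξ) (iteratedDeriv 2 ξ t) t := by
  have hξ' := hξ.differentiable_iteratedDeriv 1 (by norm_num)
  rw [iteratedDeriv_one] at hξ'
  rw [iteratedDeriv_succ, iteratedDeriv_one]
  exact (hξ' t).hasDerivAt

theorem integral_iteratedDeriv_two [CompleteSpace E] {ξ : ℝ → E} (hξ : ContDiff ℝ 2 ξ)
    (a b : ℝ) : ∫ t in a..b, iteratedDeriv 2 ξ t = deriv ξ b - deriv ξ a :=
  integral_eq_sub_of_hasDerivAt (fun t _ => hasDerivAt_deriv_of_contDiff_two hξ t)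
    ((hξ.continuous_iteratedDeriv 2 le_rfl).intervalIntegrable _ _)

theorem integral_smul_iteratedDeriv_two [CompleteSpace E] {ξ : ℝ → E} (hξ : ContDiff ℝ 2 ξ)
    (a b : ℝ) :
    ∫ t in a..b, t • iteratedDeriv 2 ξ t = (b • deriv ξ b - ξ b) - (a • deriv ξ a - ξ a) := by
  have hcont := hξ.continuous_iteratedDeriv 2 le_rfl
  refine integral_eq_sub_of_hasDerivAt (f := fun t => t • deriv ξ t - ξ t) (fun t _ => ?_)
    (Continuous.intervalIntegrable (by fun_prop) _ _)
  have hξ' := (hξ.differentiable (by norm_num) t).hasDerivAt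
  refine (((hasDerivAt_id t).smul (hasDerivAt_deriv_of_contDiff_two hξ t)).sub hξ').congr_deriv ?_
  rw [one_smul, add_sub_cancel_right, id]

noncomputable def cubicCurve (x₀ x₁ α β : E) (t : ℝ) : E :=
  x₀ + t • x₁ + (t ^ 2 / 2) • α + (t ^ 3 / 6) • β

section cubicCurve

variable (x₀ x₁ α β : E)

theorem contDiff_cubicCurve {n : WithTop ℕ∞} : ContDiff ℝ n (cubicCurve x₀ x₁ α β) := by
  unfold cubicCurve
  fun_prop

theorem deriv_cubicCurve :
    deriv (cubicCurve x₀ x₁ α β) = fun t => x₁ + t • α + (t ^ 2 / 2) • β := by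
  ext t
  refine HasDerivAt.deriv (f := cubicCurve x₀ x₁ α β) ?_
  have := ((((hasDerivAt_id t).smul_const x₁).const_add x₀).add
    (((hasDerivAt_pow 2 t).div_const 2).smul_const α)).add
    (((hasDerivAt_pow 3 t).div_const 6).smul_const β)
  refine this.congr_deriv ?_
  push_cast
  match_scalars <;> ring

theorem iteratedDeriv_two_cubicCurve (t : ℝ) :
    iteratedDeriv 2 (cubicCurve x₀ x₁ α β) t = α + t • β := by
  rw [iteratedDeriv_succ, iteratedDeriv_one, deriv_cubicCurve]
  refine HasDerivAt.deriv ?_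
  have := (((hasDerivAt_id t).smul_const α).const_add x₁).add
    (((hasDerivAt_pow 2 t).div_const 2).smul_const β)
  refine this.congr_deriv ?_
  push_cast
  match_scalars <;> ring

end cubicCurve

end Calculus

section Energy

variable {E : Type*} [NormedAddCommGroup E] [InnerProductSpace ℝ E]

theorem integral_norm_add_smul_sq (α β : E) (a : ℝ) :
    ∫ t in (0:ℝ)..a, ‖α + t • β‖ ^ 2
      = a * ‖α‖ ^ 2 + a ^ 2 * ⟪α, β⟫ + a ^ 3 / 3 * ‖β‖ ^ 2 := by
  have hexpand : ∀ t : ℝ, ‖α + t • β‖ ^ 2 = ‖α‖ ^ 2 + 2 * ⟪α, β⟫ * t + ‖β‖ ^ 2 * t ^ 2 := by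
    intro t
    rw [norm_add_sq_real, real_inner_smul_right, norm_smul, mul_pow, Real.norm_eq_abs, sq_abs]
    ring
  simp_rw [hexpand]
  rw [integral_add (Continuous.intervalIntegrable (by fun_prop) _ _)
      (Continuous.intervalIntegrable (by fun_prop) _ _),
    integral_add intervalIntegrable_const (Continuous.intervalIntegrable (by fun_prop) _ _),
    integral_const, integral_const_mul, integral_const_mul, integral_id, integral_pow]
  simp only [smul_eq_mul]
  ring

variable [CompleteSpace E]

theorem integral_inner_const_left (c : E) {f : ℝ → E} {a b : ℝ}
    (hf : IntervalIntegrable f MeasureTheory.volume a b) :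
    ∫ t in a..b, ⟪c, f t⟫ = ⟪c, ∫ t in a..b, f t⟫ :=
  (innerSL ℝ c).intervalIntegral_comp_comm hf

theorem integral_norm_sq_affine_le {f : ℝ → E} (hf : Continuous f) {a b : ℝ} (hab : a ≤ b)
    (α β : E) (h₀ : ∫ t in a..b, f t = ∫ t in a..b, α + t • β)
    (h₁ : ∫ t in a..b, t • f t = ∫ t in a..b, t • (α + t • β)) :
    ∫ t in a..b, ‖α + t • β‖ ^ 2 ≤ ∫ t in a..b, ‖f t‖ ^ 2 := by
  have hcross : ∫ t in a..b, ⟪α + t • β, f t - (α + t • β)⟫ = 0 := by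
    have hsplit : ∀ t : ℝ, ⟪α + t • β, f t - (α + t • β)⟫
        = ⟪α, f t - (α + t • β)⟫ + ⟪β, t • f t - t • (α + t • β)⟫ := by
      intro t
      rw [← smul_sub, real_inner_smul_right, ← real_inner_smul_left, ← inner_add_left]
    simp_rw [hsplit]
    rw [integral_add (Continuous.intervalIntegrable (by fun_prop) _ _)
        (Continuous.intervalIntegrable (by fun_prop) _ _),
      integral_inner_const_left _ (Continuous.intervalIntegrable (by fun_prop) _ _),
      integral_inner_const_left _ (Continuous.intervalIntegrable (by fun_prop) _ _),
      integral_sub (hf.intervalIntegrable _ _) (Continuous.intervalIntegrable (by fun_prop) _ _),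
      integral_sub (Continuous.intervalIntegrable (by fun_prop) _ _)
        (Continuous.intervalIntegrable (by fun_prop) _ _), h₀, h₁, sub_self, sub_self,
      inner_zero_right, inner_zero_right, add_zero]
  calc ∫ t in a..b, ‖α + t • β‖ ^ 2
        = ∫ t in a..b, (‖α + t • β‖ ^ 2 + 2 * ⟪α + t • β, f t - (α + t • β)⟫) := by
        rw [integral_add (Continuous.intervalIntegrable (by fun_prop) _ _)
          (Continuous.intervalIntegrable (by fun_prop) _ _), integral_const_mul, hcross,
          mul_zero, add_zero]
    _ ≤ ∫ t in a..b, ‖f t‖ ^ 2 := by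
        refine integral_mono_on hab (Continuous.intervalIntegrable (by fun_prop) _ _)
          (Continuous.intervalIntegrable (by fun_prop) _ _) fun t _ => ?_
        have := norm_add_sq_real (α + t • β) (f t - (α + t • β))
        rw [add_sub_cancel] at this
        nlinarith [sq_nonneg ‖f t - (α + t • β)‖]

theorem integral_norm_sq_iteratedDeriv_two_le {ξ η : ℝ → E} (hξ : ContDiff ℝ 2 ξ)
    (hη : ContDiff ℝ 2 η) {a b : ℝ} (hab : a ≤ b) {α β : E}
    (hη₂ : ∀ t, iteratedDeriv 2 η t = α + t • β)
    (ha₀ : ξ a = η a) (ha₁ : deriv ξ a = deriv η a)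
    (hb₀ : ξ b = η b) (hb₁ : deriv ξ b = deriv η b) :
    ∫ t in a..b, ‖iteratedDeriv 2 η t‖ ^ 2 ≤ ∫ t in a..b, ‖iteratedDeriv 2 ξ t‖ ^ 2 := by
  simp only [hη₂]
  refine integral_norm_sq_affine_le (hξ.continuous_iteratedDeriv 2 le_rfl) hab α β ?_ ?_ <;>
    simp only [← hη₂]
  · rw [integral_iteratedDeriv_two hξ, integral_iteratedDeriv_two hη, ha₁, hb₁]
  · rw [integral_smul_iteratedDeriv_two hξ, integral_smul_iteratedDeriv_two hη,
      ha₀, ha₁, hb₀, hb₁]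

end Energy

theorem msdCost_two_general (d : ℕ) (h : ℝ) (hh : 0 < h)
    (x₀ x₁ y₀ y₁ : EuclideanSpace ℝ (Fin d)) :
    msdCost 2 d h ![x₀, x₁] ![y₀, y₁]
      = (1 / h) * (‖y₁ - x₁‖ ^ 2
          + 3 * ‖y₁ - x₁ - (2 / h) • (y₀ - x₀ - h • x₁)‖ ^ 2) := by
  set a := y₁ - x₁
  set b := a - (2 / h) • (y₀ - x₀ - h • x₁)
  set η := cubicCurve x₀ x₁ (h⁻¹ • (a - (3 : ℝ) • b)) ((6 / h ^ 2) • b)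
  have hη : ContDiff ℝ 2 η := contDiff_cubicCurve ..
  have hη₀ : η 0 = x₀ ∧ deriv η 0 = x₁ := by simp [η, cubicCurve, deriv_cubicCurve]
  have hηh : η h = y₀ ∧ deriv η h = y₁ := by
    simp only [η, cubicCurve, deriv_cubicCurve, b, a]
    constructor <;> match_scalars <;> field_simp <;> ring
  have hcost : ∫ t in (0:ℝ)..h, ‖iteratedDeriv 2 η t‖ ^ 2 = 1 / h * (‖a‖ ^ 2 + 3 * ‖b‖ ^ 2) := by
    simp only [η, iteratedDeriv_two_cubicCurve]
    rw [integral_norm_add_smul_sq]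
    simp only [← real_inner_self_eq_norm_sq, real_inner_smul_left, real_inner_smul_right,
      inner_sub_left, inner_sub_right, real_inner_comm b a]
    field_simp
    ring
  refine IsLeast.csInf_eq ⟨⟨η, hη, ?_, hcost.symm⟩, ?_⟩
  · simp only [forall_fin_two_iteratedDeriv_iff]
    exact ⟨⟨hη₀.1, hηh.1⟩, hη₀.2, hηh.2⟩
  · rintro c ⟨ξ, hξ, hbdry, rfl⟩
    simp only [forall_fin_two_iteratedDeriv_iff] at hbdry
    rw [← hcost]
    exact integral_norm_sq_iteratedDeriv_two_le hξ hη hh.le (iteratedDeriv_two_cubicCurve _ _ _ _)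
      (hbdry.1.1.trans hη₀.1.symm) (hbdry.2.1.trans hη₀.2.symm)
      (hbdry.1.2.trans hηh.1.symm) (hbdry.2.2.trans hηh.2.symm)

theorem msdCost_two (d : ℕ) (hd : 1 ≤ d) (h : ℝ) (hh : 0 < h)
    (x₀ x₁ y₀ y₁ : EuclideanSpace ℝ (Fin d)) :
    msdCost 2 d h ![x₀, x₁] ![y₀, y₁]
      = (1 / h) * (‖y₁ - x₁‖ ^ 2
          + 3 * ‖y₁ - x₁ - (2 / h) • (y₀ - x₀ - h • x₁)‖ ^ 2) :=
  msdCost_two_general d h hh x₀ x₁ y₀ y₁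
end

section
/- The n×n matrix H_n(h) = ½ [B_n(h) A_n(h)^{-1} + (B_n(h) A_n(h)^{-1})^T] is positive definite, where B_n(h)[i₁,i₂] = (-1)^{n-i₁-1} (n+i₂)!/(i₁+i₂-n+1)! · h^{i₂+i₁-n+1} when i₁+i₂ ≥ n−1 and 0 otherwise (indices 0 to n−1), and A_n(h) is the Wronskian matrix of t^n, ..., t^{2n-1} at t = h > 0. -/
/-!
Write `p i = (X ^ (n + i))⁽ⁿ⁾`, a nonzero multiple of `X ^ i`. Column `i` of `A_n(h)` lists the
derivatives of order `k < n` of `X ^ (n + i)` at `h`, and column `j` of `B_n(h)` lists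
`(-1) ^ (n - 1 - k) (p j)⁽ⁿ⁻¹⁻ᵏ⁾(h)`. So `(Aᵀ B) i j` is the boundary term of `n`-fold integration
by parts in `∫₀ʰ p i * p j`: the boundary terms at `0` vanish since `X ^ (n + i)` has a zero of
order `n + i` there, and `(p j)⁽ⁿ⁾ = 0`. Thus `Aᵀ B` is the Gram matrix of the linearly independent
`p i` in `L²(0, h)`, hence positive definite. Finally, for `x = A⁻¹ z` we get
`zᵀ (B A⁻¹) z = xᵀ (Aᵀ B) x > 0`, and this is the quadratic form of the symmetric part of `B A⁻¹`.
-/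

/-- The matrix `B_n(h)` from the explicit cost formula. -/
noncomputable def Bmat (n : ℕ) (h : ℝ) : Matrix (Fin n) (Fin n) ℝ :=
  Matrix.of fun i₁ i₂ : Fin n =>
    if n - 1 ≤ i₁.1 + i₂.1 then
      (-1 : ℝ) ^ (n - i₁.1 - 1) * ((n + i₂.1).factorial : ℝ) /
        ((i₁.1 + i₂.1 + 1 - n).factorial : ℝ) * h ^ (i₁.1 + i₂.1 + 1 - n)
    else 0

/-- The Wronskian matrix `A_n(h)` of `t^n, ..., t^{2n-1}` at `t = h`. -/
noncomputable def Amat (n : ℕ) (h : ℝ) : Matrix (Fin n) (Fin n) ℝ :=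
  Matrix.of fun k i : Fin n =>
    (((n + i.1).factorial : ℝ) / ((n + i.1 - k.1).factorial : ℝ)) * h ^ (n + i.1 - k.1)

open Polynomial Matrix Finset

theorem Nat.cast_descFactorial_eq_factorial_div {K : Type*} [Field K] [CharZero K] {m k : ℕ}
    (hk : k ≤ m) : (m.descFactorial k : K) = m.factorial / (m - k).factorial := by
  rw [eq_div_iff (Nat.cast_ne_zero.mpr (Nat.factorial_ne_zero _)), ← Nat.cast_mul, mul_comm,
    Nat.factorial_mul_descFactorial hk]

namespace Polynomial

variable {R : Type*} [CommRing R]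

/-- `∫ₐᵇ f⁽ᴺ⁾ g = [byPartsSum N f g]ₐᵇ + (-1) ^ N ∫ₐᵇ f g⁽ᴺ⁾`. -/
noncomputable def byPartsSum (N : ℕ) (f g : R[X]) : R[X] :=
  ∑ k ∈ range N, (-1) ^ (N - k - 1) * derivative^[k] f * derivative^[N - k - 1] g

theorem byPartsSum_succ (N : ℕ) (f g : R[X]) :
    byPartsSum (N + 1) f g = derivative^[N] f * g - byPartsSum N f (derivative g) := by
  rw [byPartsSum, sum_range_succ, byPartsSum, sub_eq_add_neg, add_comm, ← sum_neg_distrib]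
  simp only [Nat.add_sub_cancel_left, Nat.sub_self, pow_zero, one_mul, Function.iterate_zero_apply]
  congr 1
  refine sum_congr rfl fun k hk => ?_
  obtain ⟨d, rfl⟩ := Nat.exists_eq_add_of_lt (mem_range.mp hk)
  rw [show k + d + 1 + 1 - k - 1 = d + 1 by omega, show k + d + 1 - k - 1 = d by omega,
    Function.iterate_succ_apply, pow_succ]
  ring

theorem derivative_byPartsSum (N : ℕ) (f g : R[X]) :
    derivative (byPartsSum N f g) = derivative^[N] f * g - (-1) ^ N * f * derivative^[N] g := by
  induction N generalizing g with
  | zero => simp [byPartsSum]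
  | succ N ih =>
    rw [byPartsSum_succ, derivative_sub, derivative_mul, ih]
    simp only [← Function.iterate_succ_apply' derivative, ← Function.iterate_succ_apply derivative]
    ring

theorem eval_iterate_derivative_X_pow_of_le {K : Type*} [Field K] [CharZero K] {m k : ℕ}
    (hk : k ≤ m) (t : K) :
    (derivative^[k] (X ^ m : K[X])).eval t = m.factorial / (m - k).factorial * t ^ (m - k) := by
  simp [iterate_derivative_X_pow_eq_natCast_mul, Nat.cast_descFactorial_eq_factorial_div hk]

theorem eval_iterate_derivative_X_pow_of_lt {m k : ℕ} (hk : m < k) (t : R) :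
    (derivative^[k] (X ^ m : R[X])).eval t = 0 := by
  simp [iterate_derivative_X_pow_eq_natCast_mul, Nat.descFactorial_eq_zero_iff_lt.mpr hk]

theorem eval_zero_byPartsSum_X_pow {N m : ℕ} (hN : N ≤ m) (g : R[X]) :
    (byPartsSum N (X ^ m) g).eval 0 = 0 := by
  refine (eval_finsetSum _ _ _).trans (sum_eq_zero fun k hk => ?_)
  have hmk : m - k ≠ 0 := by have := mem_range.mp hk; omega
  simp [iterate_derivative_X_pow_eq_natCast_mul, zero_pow hmk]

theorem linearIndependent_iterate_derivative_X_pow (K : Type*) [Field K] [CharZero K] (n : ℕ) :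
    LinearIndependent K fun i : Fin n => derivative^[n] (X ^ (n + i : ℕ) : K[X]) := by
  let S : Sequence K := ⟨fun i => derivative^[n] (X ^ (n + i)), fun i => by
    rw [iterate_derivative_X_pow_eq_C_mul, Nat.add_sub_cancel_left, degree_C_mul_X_pow]
    exact Nat.cast_ne_zero.mpr (Nat.descFactorial_eq_zero_iff_lt.not.mpr (by omega))⟩
  exact S.linearIndependent.comp _ Fin.val_injective

theorem integral_eval_derivative (p : ℝ[X]) (a b : ℝ) :
    ∫ t in a..b, (derivative p).eval t = p.eval b - p.eval a :=
  intervalIntegral.integral_eq_sub_of_hasDerivAt (fun x _ => p.hasDerivAt x)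
    (p.derivative.continuous.intervalIntegrable a b)

theorem integral_eval_sq_pos {q : ℝ[X]} (hq : q ≠ 0) {a b : ℝ} (hab : a < b) :
    0 < ∫ t in a..b, q.eval t ^ 2 := by
  obtain ⟨c, hc, hqc⟩ := ((Set.Icc_infinite hab).sdiff (q.finite_setOfPred_isRoot hq)).nonempty
  exact intervalIntegral.integral_pos hab (q.continuous.pow 2).continuousOn
    (fun _ _ => sq_nonneg _) ⟨c, hc, sq_pos_of_ne_zero hqc⟩

section Gram

variable {ι : Type*} [Fintype ι]

noncomputable def intervalGram (p : ι → ℝ[X]) (a b : ℝ) : Matrix ι ι ℝ :=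
  of fun i j => ∫ t in a..b, (p i).eval t * (p j).eval t

theorem dotProduct_intervalGram_mulVec (p : ι → ℝ[X]) (a b : ℝ) (x : ι → ℝ) :
    x ⬝ᵥ intervalGram p a b *ᵥ x = ∫ t in a..b, (∑ i, x i • p i).eval t ^ 2 := by
  have hcont : ∀ i j, Continuous fun t => x i * x j * ((p i).eval t * (p j).eval t) :=
    fun i j => continuous_const.mul ((p i).continuous.mul (p j).continuous)
  calc x ⬝ᵥ intervalGram p a b *ᵥ x
      = ∑ i, ∑ j, ∫ t in a..b, x i * x j * ((p i).eval t * (p j).eval t) := by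
        simp only [dotProduct, mulVec, intervalGram, of_apply, mul_sum,
          intervalIntegral.integral_const_mul]
        exact sum_congr rfl fun i _ => sum_congr rfl fun j _ => by ring
    _ = ∫ t in a..b, ∑ i, ∑ j, x i * x j * ((p i).eval t * (p j).eval t) := by
        rw [intervalIntegral.integral_finsetSum fun i _ =>
          (continuous_finsetSum _ fun j _ => hcont i j).intervalIntegrable a b]
        exact sum_congr rfl fun i _ => (intervalIntegral.integral_finsetSum fun j _ =>
          (hcont i j).intervalIntegrable a b).symm
    _ = ∫ t in a..b, (∑ i, x i • p i).eval t ^ 2 := by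
        simp only [eval_finsetSum, eval_smul, smul_eq_mul, sq, sum_mul_sum]
        exact intervalIntegral.integral_congr fun t _ =>
          sum_congr rfl fun i _ => sum_congr rfl fun j _ => by ring

theorem intervalGram_posDef {p : ι → ℝ[X]} (hp : LinearIndependent ℝ p) {a b : ℝ} (hab : a < b) :
    (intervalGram p a b).PosDef := by
  refine .of_dotProduct_mulVec_pos ?_ fun x hx => ?_
  · ext i j
    simp only [intervalGram, conjTranspose_apply, of_apply, star_trivial, mul_comm]
  · rw [star_trivial, dotProduct_intervalGram_mulVec]
    have hq : ∑ i, x i • p i ≠ 0 := fun h0 => hx <| by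
      ext i; exact Fintype.linearIndependent_iff.mp hp x h0 i
    exact integral_eval_sq_pos hq hab

end Gram

end Polynomial

theorem Amat_apply_eq_eval (n : ℕ) (h : ℝ) (k i : Fin n) :
    Amat n h k i = (derivative^[k] (X ^ (n + i : ℕ) : ℝ[X])).eval h := by
  rw [eval_iterate_derivative_X_pow_of_le (by omega)]
  rfl

theorem Bmat_apply_eq_eval (n : ℕ) (h : ℝ) (k j : Fin n) :
    Bmat n h k j = (-1) ^ (n - k - 1) *
      (derivative^[n - k - 1] (derivative^[n] (X ^ (n + j : ℕ) : ℝ[X]))).eval h := by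
  rw [← Function.iterate_add_apply, Bmat, of_apply]
  split_ifs with hkj
  · rw [eval_iterate_derivative_X_pow_of_le (by omega),
      show n + j - (n - k - 1 + n) = k + j + 1 - n by omega]
    ring
  · rw [eval_iterate_derivative_X_pow_of_lt (by omega), mul_zero]

theorem transpose_Amat_mul_Bmat (n : ℕ) (h : ℝ) :
    (Amat n h)ᵀ * Bmat n h =
      intervalGram (fun i : Fin n => derivative^[n] (X ^ (n + i : ℕ) : ℝ[X])) 0 h := by
  ext i j
  set F : ℝ[X] := X ^ (n + i : ℕ)
  set G : ℝ[X] := derivative^[n] (X ^ (n + j : ℕ))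
  have hG : derivative^[n] G = 0 := by
    rw [← Function.iterate_add_apply]
    exact iterate_derivative_eq_zero (by rw [natDegree_X_pow]; omega)
  calc ((Amat n h)ᵀ * Bmat n h) i j = (byPartsSum n F G).eval h := by
        simp only [mul_apply, transpose_apply, Amat_apply_eq_eval, Bmat_apply_eq_eval, byPartsSum,
          eval_finsetSum, eval_mul, eval_pow, eval_neg, eval_one]
        rw [Fin.sum_univ_eq_sum_range (fun k => (derivative^[k] F).eval h *
          ((-1) ^ (n - k - 1) * (derivative^[n - k - 1] G).eval h))]
        exact sum_congr rfl fun k _ => by ring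
    _ = (byPartsSum n F G).eval h - (byPartsSum n F G).eval 0 := by
        rw [eval_zero_byPartsSum_X_pow (by omega), sub_zero]
    _ = ∫ t in (0 : ℝ)..h, (derivative (byPartsSum n F G)).eval t :=
        (integral_eval_derivative _ _ _).symm
    _ = _ := by simp [derivative_byPartsSum, hG, intervalGram, F, G]

namespace Matrix

variable {ι : Type*} [Fintype ι]

theorem posDef_half_smul_add_transpose {M : Matrix ι ι ℝ}
    (hM : ∀ x ≠ 0, 0 < x ⬝ᵥ M *ᵥ x) : ((1 / 2 : ℝ) • (M + Mᵀ)).PosDef := by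
  refine .of_dotProduct_mulVec_pos ?_ fun x hx => ?_
  · rw [IsHermitian, conjTranspose_eq_transpose_of_trivial, transpose_smul, transpose_add,
      transpose_transpose, add_comm]
  · have hMt : x ⬝ᵥ Mᵀ *ᵥ x = x ⬝ᵥ M *ᵥ x := by
      rw [mulVec_transpose, dotProduct_comm, ← dotProduct_mulVec]
    rw [star_trivial, smul_mulVec, add_mulVec, dotProduct_smul, dotProduct_add, hMt, smul_eq_mul]
    linarith [hM x hx]

theorem posDef_half_smul_mul_inv_add_transpose [DecidableEq ι] {A B : Matrix ι ι ℝ}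
    (hAB : (Aᵀ * B).PosDef) : ((1 / 2 : ℝ) • (B * A⁻¹ + (B * A⁻¹)ᵀ)).PosDef := by
  have hquad : ∀ x, x ⬝ᵥ (Aᵀ * B) *ᵥ x = (A *ᵥ x) ⬝ᵥ B *ᵥ x := fun x => by
    rw [← mulVec_mulVec, dotProduct_mulVec, vecMul_transpose]
  have hdet : IsUnit A.det := by
    refine (isUnit_iff_isUnit_det A).mp (mulVec_injective_iff_isUnit.mp fun x y hxy => ?_)
    by_contra hne
    have := hAB.dotProduct_mulVec_pos (sub_ne_zero.mpr hne)
    rw [star_trivial, hquad, mulVec_sub, hxy, sub_self, zero_dotProduct] at this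
    exact this.false
  refine posDef_half_smul_add_transpose fun z hz => ?_
  have hAz : A *ᵥ A⁻¹ *ᵥ z = z := by rw [mulVec_mulVec, mul_nonsing_inv _ hdet, one_mulVec]
  have hx : A⁻¹ *ᵥ z ≠ 0 := fun h0 => hz (by rw [← hAz, h0, mulVec_zero])
  have := hAB.dotProduct_mulVec_pos hx
  rwa [star_trivial, hquad, hAz, mulVec_mulVec] at this

end Matrix

theorem H_matrix_posDef_general (n : ℕ) (h : ℝ) (hh : 0 < h) :
    Matrix.PosDef ((1 / 2 : ℝ) •
      (Bmat n h * (Amat n h)⁻¹ + Matrix.transpose (Bmat n h * (Amat n h)⁻¹))) := by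
  refine posDef_half_smul_mul_inv_add_transpose ?_
  rw [transpose_Amat_mul_Bmat]
  exact intervalGram_posDef (linearIndependent_iterate_derivative_X_pow ℝ n) hh

theorem H_matrix_posDef (n : ℕ) (hn : 1 ≤ n) (h : ℝ) (hh : 0 < h) :
    Matrix.PosDef ((1 / 2 : ℝ) •
      (Bmat n h * (Amat n h)⁻¹ + Matrix.transpose (Bmat n h * (Amat n h)⁻¹))) :=
  H_matrix_posDef_general n h hh
end

section
/- Let n ≥ 1 and for 0 ≤ i ≤ n−1 set b[i](h) for a polynomial ξ of degree ≤ 2n−1 as b[i] = ξ^{(i)}(h) − ∑_{j=i}^{n-1} h^{j-i}/(j-i)! ξ^{(j)}(0). Then for every k with 0 ≤ k ≤ n−1: ∑_{i: i ≥ n-1-k} b[i] (-1)^{n-i-1} (n+k)!/(k+i-n+1)! h^{k+i-n+1} = (n+k)! (-1)^k (ξ^{(n-k-1)}(h) − ξ^{(n-k-1)}(0)) + ∑_{i=0}^{k-1} (-1)^i (n+k)!/(k-i)! ξ^{(n-i-1)}(h) h^{k-i}. -/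
/-!
Only the two sequences F i = ξ⁽ⁱ⁾(h) and G j = ξ⁽ʲ⁾(0) enter, and the identity holds for arbitrary
ones. After the reflection i ↦ n - 1 - i the G-part is a Cauchy product of the coefficients of
e^{hx} and e^{-hx}, i.e. of 1, so it collapses to its diagonal term; the F-part is unchanged apart
from splitting off its top term.
-/

open Finset

section

variable {K : Type*} [Field K] [CharZero K]

theorem sum_range_neg_pow_div_factorial_mul_pow_div_factorial (x : K) (m : ℕ) :
    ∑ t ∈ range (m + 1), (-x) ^ t / t.factorial * (x ^ (m - t) / (m - t).factorial) =
      if m = 0 then 1 else 0 := by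
  have binomial := add_pow (-x) x m
  rw [neg_add_cancel, zero_pow_eq] at binomial
  have hm : (m.factorial : K) ≠ 0 := Nat.cast_ne_zero.mpr m.factorial_ne_zero
  calc ∑ t ∈ range (m + 1), (-x) ^ t / t.factorial * (x ^ (m - t) / (m - t).factorial)
      = (∑ t ∈ range (m + 1), (-x) ^ t * x ^ (m - t) * m.choose t) / m.factorial := by
        rw [sum_div]
        refine sum_congr rfl fun t ht => ?_
        rw [Nat.cast_choose K (Nat.lt_succ_iff.mp (mem_range.mp ht))]
        field_simp
    _ = if m = 0 then 1 else 0 := by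
        rw [← binomial]
        split_ifs with hm0 <;> simp [hm0]

theorem sum_range_neg_one_pow_mul_sum_range_taylor (x : K) (g : ℕ → K) (k : ℕ) :
    ∑ r ∈ range (k + 1),
        (∑ s ∈ range (r + 1), x ^ (r - s) / (r - s).factorial * g s) *
          ((-1) ^ r * x ^ (k - r) / (k - r).factorial) = (-1) ^ k * g k := by
  calc _ = ∑ r ∈ range (k + 1), ∑ s ∈ range (r + 1), (-1) ^ s * g s *
          ((-x) ^ (r - s) / (r - s).factorial *
            (x ^ (k - s - (r - s)) / (k - s - (r - s)).factorial)) := by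
        refine sum_congr rfl fun r hr => ?_
        rw [sum_mul]
        refine sum_congr rfl fun s hs => ?_
        have hsr : s ≤ r := Nat.lt_succ_iff.mp (mem_range.mp hs)
        rw [Nat.sub_sub, Nat.add_sub_cancel' hsr, neg_pow, ← Nat.sub_add_cancel hsr, pow_add,
          Nat.add_sub_cancel]
        ring
    _ = ∑ s ∈ range (k + 1), (-1) ^ s * g s * ∑ t ∈ range (k - s + 1),
          (-x) ^ t / t.factorial * (x ^ (k - s - t) / (k - s - t).factorial) := by
        rw [sum_range_diag_flip (k + 1) fun s t => (-1) ^ s * g s *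
          ((-x) ^ t / t.factorial * (x ^ (k - s - t) / (k - s - t).factorial))]
        refine sum_congr rfl fun s hs => ?_
        rw [mul_sum, Nat.sub_add_comm (Nat.lt_succ_iff.mp (mem_range.mp hs))]
    _ = (-1) ^ k * g k := by
        rw [sum_range_succ, sum_eq_zero fun s hs => ?_, zero_add]
        · simp
        · have : k - s ≠ 0 := by grind
          rw [sum_range_neg_pow_div_factorial_mul_pow_div_factorial, if_neg this, mul_zero]

theorem sum_range_sub_sum_range_taylor_mul (x N : K) (f g : ℕ → K) (k : ℕ) :
    ∑ r ∈ range (k + 1),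
        (f r - ∑ s ∈ range (r + 1), x ^ (r - s) / (r - s).factorial * g s) *
          ((-1) ^ r * N / (k - r).factorial * x ^ (k - r)) =
      N * (-1) ^ k * (f k - g k) +
        ∑ r ∈ range k, (-1) ^ r * N / (k - r).factorial * f r * x ^ (k - r) := by
  calc _ = ∑ r ∈ range (k + 1), (-1) ^ r * N / (k - r).factorial * f r * x ^ (k - r) -
        N * ∑ r ∈ range (k + 1),
          (∑ s ∈ range (r + 1), x ^ (r - s) / (r - s).factorial * g s) *
            ((-1) ^ r * x ^ (k - r) / (k - r).factorial) := by
        rw [mul_sum, ← sum_sub_distrib]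
        exact sum_congr rfl fun r _ => by ring
    _ = _ := by
        rw [sum_range_neg_one_pow_mul_sum_range_taylor, sum_range_succ, Nat.sub_self]
        simp only [Nat.factorial_zero, Nat.cast_one, div_one, pow_zero, mul_one]
        ring

end

theorem sum_Icc_sub_eq_sum_range {M : Type*} [AddCommMonoid M] (φ : ℕ → M) {r m : ℕ}
    (hr : r ≤ m) : ∑ i ∈ Icc (m - r) m, φ i = ∑ s ∈ range (r + 1), φ (m - s) := by
  rw [range_eq_Ico, sum_Ico_reflect φ 0 (by omega), ← Ico_add_one_right_eq_Icc]
  congr 2; omega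

theorem E_row_eq_b_transpose_B_general (n : ℕ) (hn : 1 ≤ n) (h : ℝ)
    (a : ℕ → ℝ) (k : ℕ) (hk : k ≤ n - 1) :
    (∑ i ∈ Finset.Icc (n - 1 - k) (n - 1),
        (iteratedDeriv i (fun t : ℝ => ∑ m ∈ Finset.range (2 * n), a m * t ^ m) h
          - ∑ j ∈ Finset.Icc i (n - 1),
              h ^ (j - i) / ((j - i).factorial : ℝ) *
                iteratedDeriv j (fun t : ℝ => ∑ m ∈ Finset.range (2 * n), a m * t ^ m) 0) *
          ((-1 : ℝ) ^ (n - i - 1) * ((n + k).factorial : ℝ) /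
            ((k + i + 1 - n).factorial : ℝ) * h ^ (k + i + 1 - n)))
      = ((n + k).factorial : ℝ) * (-1 : ℝ) ^ k *
          (iteratedDeriv (n - k - 1) (fun t : ℝ => ∑ m ∈ Finset.range (2 * n), a m * t ^ m) h
            - iteratedDeriv (n - k - 1) (fun t : ℝ => ∑ m ∈ Finset.range (2 * n), a m * t ^ m) 0)
        + ∑ i ∈ Finset.range k,
            (-1 : ℝ) ^ i * ((n + k).factorial : ℝ) / ((k - i).factorial : ℝ) *
              iteratedDeriv (n - i - 1) (fun t : ℝ => ∑ m ∈ Finset.range (2 * n), a m * t ^ m) h *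
              h ^ (k - i) := by
  set ξ := fun t : ℝ => ∑ m ∈ Finset.range (2 * n), a m * t ^ m
  obtain ⟨m, rfl⟩ : ∃ m, n = m + 1 := ⟨n - 1, by omega⟩
  rw [Nat.add_sub_cancel] at hk ⊢
  rw [sum_Icc_sub_eq_sum_range _ hk]
  convert sum_range_sub_sum_range_taylor_mul h ((m + 1 + k).factorial : ℝ)
    (fun r => iteratedDeriv (m - r) ξ h) (fun s => iteratedDeriv (m - s) ξ 0) k using 1
  · refine sum_congr rfl fun r hr => ?_
    have hrm : r ≤ m := by grind
    rw [sum_Icc_sub_eq_sum_range _ hrm, show m + 1 - (m - r) - 1 = r by omega,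
      show k + (m - r) + 1 - (m + 1) = k - r by omega]
    congr 2
    refine sum_congr rfl fun s hs => ?_
    rw [show m - s - (m - r) = r - s by grind]
  · rw [show m + 1 - k - 1 = m - k by omega]
    congr 1
    refine sum_congr rfl fun i hi => ?_
    rw [show m + 1 - i - 1 = m - i by omega]

theorem E_row_eq_b_transpose_B (n : ℕ) (hn : 1 ≤ n) (h : ℝ) (hh : 0 < h)
    (a : ℕ → ℝ) (k : ℕ) (hk : k ≤ n - 1) :
    (∑ i ∈ Finset.Icc (n - 1 - k) (n - 1),
        (iteratedDeriv i (fun t : ℝ => ∑ m ∈ Finset.range (2 * n), a m * t ^ m) h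
          - ∑ j ∈ Finset.Icc i (n - 1),
              h ^ (j - i) / ((j - i).factorial : ℝ) *
                iteratedDeriv j (fun t : ℝ => ∑ m ∈ Finset.range (2 * n), a m * t ^ m) 0) *
          ((-1 : ℝ) ^ (n - i - 1) * ((n + k).factorial : ℝ) /
            ((k + i + 1 - n).factorial : ℝ) * h ^ (k + i + 1 - n)))
      = ((n + k).factorial : ℝ) * (-1 : ℝ) ^ k *
          (iteratedDeriv (n - k - 1) (fun t : ℝ => ∑ m ∈ Finset.range (2 * n), a m * t ^ m) h
            - iteratedDeriv (n - k - 1) (fun t : ℝ => ∑ m ∈ Finset.range (2 * n), a m * t ^ m) 0)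
        + ∑ i ∈ Finset.range k,
            (-1 : ℝ) ^ i * ((n + k).factorial : ℝ) / ((k - i).factorial : ℝ) *
              iteratedDeriv (n - i - 1) (fun t : ℝ => ∑ m ∈ Finset.range (2 * n), a m * t ^ m) h *
              h ^ (k - i) :=
  E_row_eq_b_transpose_B_general n hn h a k hk
end
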